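/- arXiv:2407.09067 — 2 statements merged into one kernel-verified Lean document; each statement's English description precedes it below -/
import Mathlib

section
/- If G is a connected graph of order n, then σ₁(G) ≥ n − 1, with equality if and only if G is isomorphic to the star K_{1,n−1}. -/
/-- Number of k-nearly independent vertex subsets: subsets whose induced subgraph has exactly k edges. -/
def sigmaK {V : Type*} [Fintype V] [DecidableEq V] (G : SimpleGraph V) [DecidableRel G.Adj] (k : ℕ) : ℕ :=
  (Finset.univ.filter fun s : Finset V =>
    (s.sym2.filter fun e => e ∈ G.edgeSet).card = k).card

/-- A graph is good if for every edge uv, N[u] ∪ N[v] = V(G). -/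
def IsGoodGraph {V : Type*} (G : SimpleGraph V) : Prop :=
  ∀ u v : V, G.Adj u v →
    (insert u (G.neighborSet u)) ∪ (insert v (G.neighborSet v)) = Set.univ

/-!
Sending an edge `uv` to the vertex set `{u, v}` injects the edges into the one-edge sets, so
`σ₁(G) ≥ |E(G)| ≥ n - 1`. The injection is onto exactly when no triple `{u, v, w}` induces the
single edge `uv`, i.e. when `G` is good. So equality forces a good tree; in it the neighbour of a
leaf is adjacent to every vertex, and a tree with a universal vertex is the star.
-/

open Finset

theorem Sym2.toFinset_injective {α : Type*} [DecidableEq α] :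
    Function.Injective (Sym2.toFinset : Sym2 α → Finset α) :=
  fun _ _ h ↦ Sym2.ext fun x ↦ by simpa using congr(x ∈ $h)

open SimpleGraph

section IsGoodGraph

variable {V : Type*} {G : SimpleGraph V}

theorem isGoodGraph_iff :
    IsGoodGraph G ↔ ∀ ⦃u v⦄, G.Adj u v → ∀ w, w ≠ u → w ≠ v → G.Adj u w ∨ G.Adj v w := by
  simp only [IsGoodGraph, Set.eq_univ_iff_forall, Set.mem_union, Set.mem_insert_iff,
    mem_neighborSet]
  grind

theorem isGoodGraph_starGraph (c : V) : IsGoodGraph (starGraph c) := by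
  rw [isGoodGraph_iff]
  simp only [starGraph_adj]
  grind

theorem IsGoodGraph.isUniversal_of_unique_adj (hG : IsGoodGraph G) {l c : V} (hlc : G.Adj l c)
    (hl : ∀ x, G.Adj l x → x = c) : G.IsUniversal c := by
  intro x hcx
  obtain rfl | hxl := eq_or_ne x l
  · exact hlc.symm
  · exact (isGoodGraph_iff.1 hG hlc x hxl hcx.symm).resolve_left fun hlx ↦ hcx (hl x hlx).symm

end IsGoodGraph

namespace SimpleGraph

variable {V : Type*} {G : SimpleGraph V}

theorem IsTree.eq_starGraph_of_isUniversal (hT : G.IsTree) {c : V} (hc : G.IsUniversal c) :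
    G = starGraph c := by
  ext x y
  rw [starGraph_adj]
  refine ⟨fun hxy ↦ ⟨hxy.ne, ?_⟩, ?_⟩
  · by_contra! hne
    apply hT.dist_ne_of_adj c hxy
    rw [dist_eq_one_iff_adj.2 (hc hne.1.symm), dist_eq_one_iff_adj.2 (hc hne.2.symm)]
  · rintro ⟨hxy, rfl | rfl⟩
    exacts [hc hxy, (hc hxy.symm).symm]

theorem IsTree.exists_eq_starGraph_of_isGoodGraph [Finite V] (hT : G.IsTree)
    (hG : IsGoodGraph G) : ∃ c, G = starGraph c := by
  obtain ⟨c⟩ := hT.connected.nonempty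
  cases subsingleton_or_nontrivial V
  · refine ⟨c, ?_⟩
    ext x y
    simp [Subsingleton.elim x y]
  classical
  have := Fintype.ofFinite V
  obtain ⟨l, hl⟩ := hT.exists_vert_degree_one_of_nontrivial
  obtain ⟨c, hlc, hc⟩ := degree_eq_one_iff_existsUnique_adj.1 hl
  exact ⟨c, hT.eq_starGraph_of_isUniversal (hG.isUniversal_of_unique_adj hlc hc)⟩

theorem eq_starGraph_of_iso_completeBipartiteGraph {α β : Type*} [Subsingleton α]
    (φ : G ≃g completeBipartiteGraph α β) (a : α) : G = starGraph (φ.symm (.inl a)) := by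
  ext x y
  rw [starGraph_adj, ← φ.map_adj_iff, ← φ.injective.ne_iff, RelIso.eq_symm_apply,
    RelIso.eq_symm_apply]
  rcases φ x with a₁ | b₁ <;> rcases φ y with a₂ | b₂ <;> simp [Subsingleton.elim _ a]

theorem nonempty_starGraph_iso_completeBipartiteGraph [Fintype V] [DecidableEq V] (c : V) :
    Nonempty (starGraph c ≃g completeBipartiteGraph (Fin 1) (Fin (Fintype.card V - 1))) := by
  have hc : Fintype.card {x // x = c} = 1 := Fintype.card_subtype_eq c
  have hc' : Fintype.card {x // ¬x = c} = Fintype.card V - 1 := by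
    rw [Fintype.card_subtype_compl, hc]
  let e : V ≃ Fin 1 ⊕ Fin (Fintype.card V - 1) := (Equiv.sumCompl (· = c)).symm.trans
    ((Fintype.equivFinOfCardEq hc).sumCongr (Fintype.equivFinOfCardEq hc'))
  have he : e.symm (.inl 0) = c := ((Fintype.equivFinOfCardEq hc).symm 0).prop
  have hcomap : (completeBipartiteGraph _ _).comap e = starGraph c :=
    (eq_starGraph_of_iso_completeBipartiteGraph (Iso.comap e _) 0).trans (congrArg starGraph he)
  exact ⟨hcomap ▸ Iso.comap e _⟩

variable [Fintype V] [DecidableEq V] (G) [DecidableRel G.Adj]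

def oneEdgeSets : Finset (Finset V) :=
  univ.filter fun s ↦ #(s.sym2.filter (· ∈ G.edgeSet)) = 1

theorem sigmaK_one_eq_card_oneEdgeSets : sigmaK G 1 = #(oneEdgeSets G) := rfl

variable {G}

theorem mem_oneEdgeSets {s : Finset V} :
    s ∈ oneEdgeSets G ↔ ∃ u ∈ s, ∃ v ∈ s, G.Adj u v ∧
      ∀ x ∈ s, ∀ y ∈ s, G.Adj x y → s(x, y) = s(u, v) := by
  simp only [oneEdgeSets, mem_filter, mem_univ, true_and, card_eq_one]
  constructor
  · rintro ⟨e, he⟩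
    have hmem (x y : V) :
        s(x, y) ∈ s.sym2.filter (· ∈ G.edgeSet) ↔ (x ∈ s ∧ y ∈ s) ∧ G.Adj x y := by
      simp
    induction e using Sym2.ind with
    | _ u v =>
      obtain ⟨⟨hu, hv⟩, huv⟩ := (hmem u v).1 (he ▸ mem_singleton_self _)
      exact ⟨u, hu, v, hv, huv, fun x hx y hy hxy ↦
        mem_singleton.1 (he ▸ (hmem x y).2 ⟨⟨hx, hy⟩, hxy⟩)⟩
  · rintro ⟨u, hu, v, hv, huv, hs⟩
    refine ⟨s(u, v), eq_singleton_iff_unique_mem.2 ⟨by simp [hu, hv, huv], fun e he ↦ ?_⟩⟩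
    induction e using Sym2.ind with
    | _ x y =>
      simp only [mem_filter, mk_mem_sym2_iff, mem_edgeSet] at he
      exact hs x he.1.1 y he.1.2 he.2

theorem toFinset_mem_oneEdgeSets {e : Sym2 V} (he : e ∈ G.edgeSet) :
    e.toFinset ∈ oneEdgeSets G := by
  induction e using Sym2.ind with
  | _ u v =>
    rw [Sym2.toFinset_mk_eq, mem_oneEdgeSets]
    refine ⟨u, by simp, v, by simp, he, ?_⟩
    simp only [mem_insert, mem_singleton]
    rintro x (rfl | rfl) y (rfl | rfl) hxy
    all_goals first | exact (G.irrefl hxy).elim | simp [Sym2.eq_swap]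

variable (G)

theorem image_toFinset_edgeFinset_subset_oneEdgeSets :
    G.edgeFinset.image Sym2.toFinset ⊆ oneEdgeSets G := by
  simp only [subset_iff, mem_image, mem_edgeFinset]
  rintro _ ⟨e, he, rfl⟩
  exact toFinset_mem_oneEdgeSets he

theorem card_edgeFinset_le_sigmaK_one : #G.edgeFinset ≤ sigmaK G 1 := by
  rw [← card_image_of_injective _ Sym2.toFinset_injective]
  exact card_le_card (image_toFinset_edgeFinset_subset_oneEdgeSets G)

theorem oneEdgeSets_subset_image_iff :
    oneEdgeSets G ⊆ G.edgeFinset.image Sym2.toFinset ↔ IsGoodGraph G := by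
  rw [isGoodGraph_iff]
  constructor
  · intro h u v huv w hwu hwv
    by_contra! hw
    have : {u, v, w} ∈ oneEdgeSets G := by
      refine mem_oneEdgeSets.2 ⟨u, by simp, v, by simp, huv, ?_⟩
      simp only [mem_insert, mem_singleton]
      rintro x (rfl | rfl | rfl) y (rfl | rfl | rfl) hxy
      all_goals first | exact (G.irrefl hxy).elim | simp_all [Sym2.eq_swap, G.adj_comm]
    obtain ⟨e, he, hue⟩ := mem_image.1 (h this)
    have h2 := Sym2.card_toFinset_of_not_isDiag e (G.not_isDiag_of_mem_edgeSet (mem_edgeFinset.1 he))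
    rw [hue, card_insert_of_notMem (by simp [huv.ne, hwu.symm]),
      card_insert_of_notMem (by simp [hwv.symm]), card_singleton] at h2
    omega
  · intro h s hs
    obtain ⟨u, hu, v, hv, huv, hs⟩ := mem_oneEdgeSets.1 hs
    refine mem_image.2 ⟨s(u, v), mem_edgeFinset.2 huv, ?_⟩
    rw [Sym2.toFinset_mk_eq]
    refine (insert_subset hu (singleton_subset_iff.2 hv)).antisymm fun w hw ↦ ?_
    by_contra! hwuv
    simp only [mem_insert, mem_singleton, not_or] at hwuv
    rcases h huv w hwuv.1 hwuv.2 with huw | hvw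
    · exact hwuv.2 (Sym2.congr_right.1 (hs u hu w hw huw))
    · exact hwuv.1 (Sym2.congr_right.1 ((hs v hv w hw hvw).trans (Sym2.eq_swap)))

theorem sigmaK_one_eq_card_edgeFinset_iff : sigmaK G 1 = #G.edgeFinset ↔ IsGoodGraph G := by
  have hsub := image_toFinset_edgeFinset_subset_oneEdgeSets G
  rw [← oneEdgeSets_subset_image_iff, sigmaK_one_eq_card_oneEdgeSets,
    ← card_image_of_injective _ Sym2.toFinset_injective]
  exact ⟨fun h ↦ (eq_of_subset_of_card_le hsub h.le).ge, fun h ↦ congrArg card (h.antisymm hsub)⟩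

end SimpleGraph

theorem stmt2 {V : Type*} [Fintype V] [DecidableEq V] (G : SimpleGraph V) [DecidableRel G.Adj]
    (hconn : G.Connected) :
    Fintype.card V - 1 ≤ sigmaK G 1 ∧
      (sigmaK G 1 = Fintype.card V - 1 ↔
        Nonempty (G ≃g completeBipartiteGraph (Fin 1) (Fin (Fintype.card V - 1)))) := by
  have hE := hconn.card_vert_le_card_edgeSet_add_one
  rw [Nat.card_eq_fintype_card, Nat.card_eq_fintype_card, ← edgeFinset_card] at hE
  have hσ := card_edgeFinset_le_sigmaK_one G
  refine ⟨by omega, fun h ↦ ?_, fun ⟨φ⟩ ↦ ?_⟩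
  · have hgood := (sigmaK_one_eq_card_edgeFinset_iff G).1 (by omega)
    have hcard : #G.edgeFinset + 1 = Fintype.card V := by
      have := Fintype.card_pos_iff.2 hconn.nonempty
      omega
    have htree : G.IsTree := isTree_iff_connected_and_card.2 ⟨hconn, by
      rw [Nat.card_eq_fintype_card, Nat.card_eq_fintype_card, ← edgeFinset_card]; exact hcard⟩
    obtain ⟨c, rfl⟩ := htree.exists_eq_starGraph_of_isGoodGraph hgood
    exact nonempty_starGraph_iso_completeBipartiteGraph c
  · obtain ⟨c, rfl⟩ : ∃ c, G = starGraph c := ⟨_, eq_starGraph_of_iso_completeBipartiteGraph φ 0⟩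
    have := (isTree_starGraph c).card_edgeFinset
    rw [(sigmaK_one_eq_card_edgeFinset_iff _).2 (isGoodGraph_starGraph c)]
    omega
end

section
/- If G is a good graph that contains a cycle, then G does not contain a cut-vertex. -/
/-- A cut-vertex: a vertex whose deletion disconnects the graph. -/
def IsCutVertex {V : Type*} (G : SimpleGraph V) (v : V) : Prop :=
  G.Connected ∧ ¬ (G.induce {w | w ≠ v}).Connected

/-!
Deleting a vertex `v` from a graph with a cycle leaves an edge `ab` of that cycle. In a good graph
every vertex lies in `N[a] ∪ N[b]`, so after deleting `v` every remaining vertex is still at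
distance at most one from the edge `ab`, and `G - v` is connected.
-/

namespace SimpleGraph

variable {V : Type*} {G : SimpleGraph V}

lemma Walk.IsCycle.exists_adj_ne {u : V} {p : G.Walk u u} (hp : p.IsCycle) (v : V) :
    ∃ a b, G.Adj a b ∧ a ≠ v ∧ b ≠ v := by
  classical
  by_cases hv : v ∈ p.support
  · -- Rotated to start at `v`, the cycle's second edge joins two vertices other than `v`.
    have hq := hp.rotate hv
    have hlen := hq.three_le_length
    refine ⟨_, _, (p.rotate v hv).adj_getVert_succ (i := 1) (by lia), ?_, ?_⟩ <;>
      rw [Ne, hq.getVert_endpoint_iff (by lia)] <;> lia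
  · exact ⟨u, p.snd, p.adj_snd hp.not_nil, fun h => hv (h ▸ p.start_mem_support),
      fun h => hv (h ▸ p.getVert_mem_support 1)⟩

lemma connected_of_adj_of_forall_eq_or_adj {a b : V} (hab : G.Adj a b)
    (hdom : ∀ x, x = a ∨ G.Adj a x ∨ x = b ∨ G.Adj b x) : G.Connected := by
  refine (connected_iff_exists_forall_reachable G).2 ⟨a, fun x => ?_⟩
  rcases hdom x with rfl | hax | rfl | hbx
  · rfl
  · exact hax.reachable
  · exact hab.reachable
  · exact hab.reachable.trans hbx.reachable

end SimpleGraph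

open SimpleGraph

lemma IsGoodGraph.eq_or_adj {V : Type*} {G : SimpleGraph V} (hgood : IsGoodGraph G) {a b : V}
    (hab : G.Adj a b) (x : V) : x = a ∨ G.Adj a x ∨ x = b ∨ G.Adj b x := by
  have hx : x ∈ insert a (G.neighborSet a) ∪ insert b (G.neighborSet b) :=
    (hgood a b hab).symm ▸ Set.mem_univ x
  simpa only [Set.mem_union, Set.mem_insert_iff, mem_neighborSet, or_assoc] using hx

lemma IsGoodGraph.induce_connected {V : Type*} {G : SimpleGraph V} (hgood : IsGoodGraph G)
    {a b : V} (hab : G.Adj a b) {s : Set V} (ha : a ∈ s) (hb : b ∈ s) :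
    (G.induce s).Connected :=
  connected_of_adj_of_forall_eq_or_adj (a := ⟨a, ha⟩) (b := ⟨b, hb⟩) hab fun x => by
    simpa only [induce_adj, Subtype.ext_iff] using hgood.eq_or_adj hab x

theorem stmt5 {V : Type*} (G : SimpleGraph V)
    (hgood : IsGoodGraph G) (hcyc : ¬ G.IsAcyclic) :
    ∀ v : V, ¬ IsCutVertex G v := by
  intro v hcut
  obtain ⟨u, c, hc⟩ : ∃ u, ∃ c : G.Walk u u, c.IsCycle := by
    simpa only [IsAcyclic, not_forall, not_not] using hcyc
  obtain ⟨a, b, hab, ha, hb⟩ := hc.exists_adj_ne v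
  exact hcut.2 (hgood.induce_connected hab ha hb)
end
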